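/- Let ω ≥ 1, κ > 0, let k ≥ 1 and n_1,…,n_k be positive integers with n = n_1+⋯+n_k, and let ρ_B(s) = s^{−1} e^{−ω s} I_0(s). Then ∫_0^∞ (u^{n−1}/Γ(n)) exp( κ ∫_0^∞ (e^{−u s} − 1) ρ_B(s) ds ) ∏_{j=1}^k κ ∫_0^∞ s^{n_j} e^{−u s} ρ_B(s) ds du = κ^k ∫_0^∞ (u^{n−1}/Γ(n)) ( (ω + √(ω^2 − 1)) / (ω + u + √((ω+u)^2 − 1)) )^κ (u+ω)^{−n} ∏_{j=1}^k Γ(n_j) · ₂F₁( n_j/2, (n_j+1)/2; 1; 1/(u+ω)^2 ) du. -/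

import Mathlib

open MeasureTheory Set

/-- The modified Bessel function of the first kind of order 0,
`I₀(s) = Σ_{m=0}^∞ (s/2)^{2m} / (m!)²`. -/
noncomputable def besselI0 (s : ℝ) : ℝ :=
  ∑' m : ℕ, (s / 2) ^ (2 * m) / ((Nat.factorial m : ℝ)) ^ 2

/-- The Pochhammer symbol `(x)_m = Γ(x + m) / Γ(x)`. -/
noncomputable def poch (x : ℝ) (m : ℕ) : ℝ := Real.Gamma (x + m) / Real.Gamma x

/-- The Gauss hypergeometric series `₂F₁(a, b; 1; z) = Σ_m (a)_m (b)_m / ((1)_m m!) z^m`. -/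
noncomputable def hyp2F1one (a b z : ℝ) : ℝ :=
  ∑' m : ℕ, (poch a m * poch b m / (poch 1 m * (Nat.factorial m : ℝ))) * z ^ m

/-!
Expanding `I₀` in its power series and integrating term by term gives the Laplace transform
`∫₀^∞ s^(N-1) e^(-ts) I₀(s) ds = Γ(N) t^(-N) ₂F₁(N/2, (N+1)/2; 1; t⁻²)`; the coefficients match
through the duplication formula `Γ(N + 2m) = Γ(N) 4^m (N/2)_m ((N+1)/2)_m`. For `N = 1` the
hypergeometric series is the binomial series of `(1 - z)^(-1/2)`, so `I₀` has Laplace transform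
`(t² - 1)^(-1/2)`. Writing `(e^(-ωs) - e^(-(ω+u)s)) / s = ∫_ω^(ω+u) e^(-vs) dv` and exchanging the
integrals turns the exponent into `-∫_ω^(ω+u) (v² - 1)^(-1/2) dv = arcosh ω - arcosh (ω + u)`, and
`exp (arcosh x) = x + √(x² - 1)`.
-/

open Real

lemma poch_zero {x : ℝ} (hx : 0 < x) : poch x 0 = 1 := by
  simp [poch, (Gamma_pos_of_pos hx).ne']

lemma poch_succ {x : ℝ} (hx : 0 < x) (m : ℕ) : poch x (m + 1) = poch x m * (x + m) := by
  rw [poch, poch, Nat.cast_succ, ← add_assoc, Gamma_add_one (by positivity)]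
  ring

lemma poch_eq_eval_ascPochhammer {x : ℝ} (hx : 0 < x) (m : ℕ) :
    poch x m = (ascPochhammer ℝ m).eval x := by
  induction m with
  | zero => simp [poch_zero hx]
  | succ m ih => rw [poch_succ hx, ascPochhammer_succ_eval, ih]

lemma poch_one (m : ℕ) : poch 1 m = m.factorial := by
  rw [poch_eq_eval_ascPochhammer one_pos, ascPochhammer_eval_one]

lemma Gamma_add_two_mul {x : ℝ} (hx : 0 < x) (m : ℕ) :
    Gamma (x + 2 * m) = Gamma x * 4 ^ m * (poch (x / 2) m * poch ((x + 1) / 2) m) := by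
  induction m with
  | zero => simp [poch_zero (half_pos hx), poch_zero (by positivity : 0 < (x + 1) / 2)]
  | succ m ih =>
    have hxm : 0 < x + 2 * m := by positivity
    rw [Nat.cast_succ, show x + 2 * (m + 1 : ℝ) = x + 2 * m + 1 + 1 by ring,
      Gamma_add_one (by positivity), Gamma_add_one hxm.ne', ih,
      poch_succ (half_pos hx), poch_succ (by positivity)]
    ring

lemma hyp2F1one_eq_ordinaryHypergeometric {a b : ℝ} (ha : 0 < a) (hb : 0 < b) (z : ℝ) :
    hyp2F1one a b z = ₂F₁ a b (1 : ℝ) z := by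
  rw [hyp2F1one, ordinaryHypergeometric, ordinaryHypergeometric_sum_eq]
  refine tsum_congr fun m => ?_
  rw [poch_eq_eval_ascPochhammer ha, poch_eq_eval_ascPochhammer hb, poch_one,
    ascPochhammer_eval_one, smul_eq_mul]
  field_simp

lemma ordinaryHypergeometric_half_one_one {z : ℝ} (hz : |z| < 1) :
    ₂F₁ (1 / 2 : ℝ) 1 1 z = (1 - z) ^ (-(1 / 2) : ℝ) := by
  have hsum := Real.one_add_rpow_hasFPowerSeriesOnBall_zero (a := -(1 / 2)).hasSum
    (y := -z) (by
      simpa [Metric.mem_eball, edist_zero_right, enorm_eq_nnnorm, ← NNReal.coe_lt_coe] using hz)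
  rw [binomialSeries_eq_ordinaryHypergeometricSeries (b := (1 : ℝ)) (by intro k; norm_cast),
    neg_neg] at hsum
  simp only [FormalMultilinearSeries.compContinuousLinearMap_apply] at hsum
  rw [zero_add, ← sub_eq_add_neg] at hsum
  convert hsum.tsum_eq using 1
  simp [ordinaryHypergeometric, FormalMultilinearSeries.sum, Function.comp_def]

lemma hyp2F1one_half_one {z : ℝ} (hz : |z| < 1) :
    hyp2F1one (1 / 2) 1 z = (1 - z) ^ (-(1 / 2) : ℝ) := by
  rw [hyp2F1one_eq_ordinaryHypergeometric (by norm_num) one_pos,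
    ordinaryHypergeometric_half_one_one hz]

lemma besselI0_term_nonneg (s : ℝ) (m : ℕ) : 0 ≤ (s / 2) ^ (2 * m) / (m.factorial : ℝ) ^ 2 := by
  rw [pow_mul]
  positivity

lemma besselI0_term_le_cosh_term (s : ℝ) (m : ℕ) :
    (s / 2) ^ (2 * m) / (m.factorial : ℝ) ^ 2 ≤ s ^ (2 * m) / (2 * m).factorial := by
  have hfact : ((2 * m).factorial : ℝ) ≤ 4 ^ m * (m.factorial : ℝ) ^ 2 := by
    have h := Nat.choose_mul_factorial_mul_factorial (Nat.le_mul_of_pos_left m two_pos)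
    rw [show 2 * m - m = m by omega, ← Nat.centralBinom_eq_two_mul_choose] at h
    rw [← h, mul_assoc, ← sq]
    exact_mod_cast Nat.mul_le_mul_right _ (Nat.centralBinom_le_four_pow m)
  rw [div_pow, pow_mul 2 2 m, div_div, show (2 : ℝ) ^ 2 = 4 by norm_num]
  exact div_le_div_of_nonneg_left (by rw [pow_mul]; positivity) (by positivity) hfact

lemma hasSum_besselI0 (s : ℝ) :
    HasSum (fun m : ℕ => (s / 2) ^ (2 * m) / (m.factorial : ℝ) ^ 2) (besselI0 s) :=
  (Summable.of_nonneg_of_le (besselI0_term_nonneg s) (besselI0_term_le_cosh_term s)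
    (Real.hasSum_cosh s).summable).hasSum

lemma besselI0_nonneg (s : ℝ) : 0 ≤ besselI0 s :=
  (hasSum_besselI0 s).nonneg (besselI0_term_nonneg s)

lemma besselI0_le_cosh (s : ℝ) : besselI0 s ≤ cosh s :=
  hasSum_le (besselI0_term_le_cosh_term s) (hasSum_besselI0 s) (Real.hasSum_cosh s)

@[fun_prop]
lemma measurable_besselI0 : Measurable besselI0 :=
  Measurable.tsum fun m => by fun_prop

lemma integrableOn_pow_mul_exp_neg_mul {c : ℝ} (hc : 0 < c) (k : ℕ) :
    IntegrableOn (fun s : ℝ => s ^ k * exp (-(c * s))) (Ioi 0) := by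
  refine (integrableOn_rpow_mul_exp_neg_mul_rpow (s := k) (by linarith [k.cast_nonneg (α := ℝ)])
    one_pos hc).congr_fun (fun s _ => ?_) measurableSet_Ioi
  simp [rpow_natCast]

lemma integral_pow_mul_exp_neg_mul {c : ℝ} (hc : 0 < c) (k : ℕ) :
    ∫ s in Ioi 0, s ^ k * exp (-(c * s)) = Gamma (k + 1) / c ^ (k + 1) := by
  have h := integral_rpow_mul_exp_neg_mul_Ioi (a := k + 1) (by positivity) hc
  simp only [add_sub_cancel_right, rpow_natCast] at h
  rw [h, ← Nat.cast_succ, rpow_natCast, one_div_pow, Nat.cast_succ, one_div_mul_eq_div]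

lemma integrableOn_pow_mul_exp_neg_mul_besselI0 {t : ℝ} (ht : 1 < t) (k : ℕ) :
    IntegrableOn (fun s : ℝ => s ^ k * exp (-(t * s)) * besselI0 s) (Ioi 0) := by
  refine (integrableOn_pow_mul_exp_neg_mul (c := t - 1) (by linarith) k).mono'
    (by fun_prop) ?_
  filter_upwards [ae_restrict_mem measurableSet_Ioi] with s (hs : 0 < s)
  have hcosh : cosh s ≤ exp s := by
    rw [cosh_eq]
    linarith [exp_le_exp.2 (show -s ≤ s by linarith)]
  rw [norm_of_nonneg (by have := besselI0_nonneg s; positivity), mul_assoc,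
    show -((t - 1) * s) = -(t * s) + s by ring, exp_add]
  gcongr
  exact (besselI0_le_cosh s).trans hcosh

lemma integral_pow_mul_exp_neg_mul_besselI0_term {t : ℝ} (ht : 0 < t) {N : ℕ} (hN : 1 ≤ N)
    (m : ℕ) :
    ∫ s in Ioi 0, s ^ (N - 1) * exp (-(t * s)) * ((s / 2) ^ (2 * m) / (m.factorial : ℝ) ^ 2)
      = Gamma N / t ^ N * (poch (N / 2) m * poch ((N + 1) / 2) m /
          (poch 1 m * m.factorial) * (1 / t ^ 2) ^ m) := by
  have hterm : ∀ s : ℝ, s ^ (N - 1) * exp (-(t * s)) * ((s / 2) ^ (2 * m) / (m.factorial : ℝ) ^ 2)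
      = (4 ^ m * (m.factorial : ℝ) ^ 2)⁻¹ * (s ^ (N - 1 + 2 * m) * exp (-(t * s))) := by
    intro s
    rw [div_pow, pow_mul 2 2 m, pow_add]
    ring
  have hexp : ((N - 1 + 2 * m : ℕ) : ℝ) + 1 = N + 2 * m := by
    rw [Nat.cast_add, Nat.cast_sub hN]
    push_cast
    ring
  simp_rw [hterm]
  rw [integral_const_mul, integral_pow_mul_exp_neg_mul ht, hexp,
    show N - 1 + 2 * m + 1 = N + 2 * m by omega,
    Gamma_add_two_mul (by exact_mod_cast hN), poch_one, one_div_pow, ← pow_mul, pow_add]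
  field_simp

lemma integral_pow_mul_exp_neg_mul_besselI0 {t : ℝ} (ht : 1 < t) {N : ℕ} (hN : 1 ≤ N) :
    ∫ s in Ioi 0, s ^ (N - 1) * exp (-(t * s)) * besselI0 s
      = Gamma N / t ^ N * hyp2F1one (N / 2) ((N + 1) / 2) (1 / t ^ 2) := by
  set F : ℕ → ℝ → ℝ := fun m s =>
    s ^ (N - 1) * exp (-(t * s)) * ((s / 2) ^ (2 * m) / (m.factorial : ℝ) ^ 2)
  have hF : ∀ s, HasSum (F · s) (s ^ (N - 1) * exp (-(t * s)) * besselI0 s) :=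
    fun s => (hasSum_besselI0 s).mul_left _
  have hnorm : ∀ s, HasSum (‖F · s‖) ‖s ^ (N - 1) * exp (-(t * s)) * besselI0 s‖ := by
    intro s
    simp only [F, norm_mul, norm_of_nonneg (besselI0_term_nonneg s _),
      norm_of_nonneg (besselI0_nonneg s)]
    exact (hasSum_besselI0 s).mul_left _
  have hsum := hasSum_integral_of_dominated_convergence (μ := volume.restrict (Ioi 0))
    (fun m s => ‖F m s‖) (fun m => by simp only [F]; fun_prop)
    (fun m => ae_of_all _ fun s => le_rfl)
    (ae_of_all _ fun s => (hnorm s).summable)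
    (by simpa only [(hnorm _).tsum_eq] using
      (integrableOn_pow_mul_exp_neg_mul_besselI0 ht (N - 1)).norm)
    (ae_of_all _ hF)
  rw [hyp2F1one, ← tsum_mul_left, ← hsum.tsum_eq]
  exact tsum_congr fun m => integral_pow_mul_exp_neg_mul_besselI0_term (by linarith) hN m

lemma integral_exp_neg_mul_besselI0 {v : ℝ} (hv : 1 < v) :
    ∫ s in Ioi 0, exp (-(v * s)) * besselI0 s = (√(v ^ 2 - 1))⁻¹ := by
  have h := integral_pow_mul_exp_neg_mul_besselI0 hv le_rfl
  have hz : 1 / v ^ 2 < 1 := by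
    rw [div_lt_one (by positivity)]
    nlinarith
  have hsqrt : √(v ^ 2 - 1) = √(1 - 1 / v ^ 2) * v := by
    rw [show v ^ 2 - 1 = (1 - 1 / v ^ 2) * v ^ 2 by field_simp, sqrt_mul (by linarith),
      sqrt_sq (by linarith)]
  norm_num only [pow_zero, pow_one, one_mul, Nat.cast_one, Gamma_one] at h
  rw [h, hyp2F1one_half_one (by rwa [abs_of_pos (by positivity)]), rpow_neg (by linarith),
    ← sqrt_eq_rpow, hsqrt, mul_inv, one_div, mul_comm]

lemma integral_Ioc_exp_neg_mul {s : ℝ} (hs : s ≠ 0) {a b : ℝ} (hab : a ≤ b) :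
    ∫ v in Ioc a b, exp (-(v * s)) = (exp (-(a * s)) - exp (-(b * s))) / s := by
  have h := intervalIntegral.integral_comp_mul_right (a := a) (b := b) exp (neg_ne_zero.2 hs)
  simp only [mul_neg, integral_exp, smul_eq_mul] at h
  rw [← intervalIntegral.integral_of_le hab, h]
  field_simp
  ring

lemma integral_exp_sub_exp_div_mul {f : ℝ → ℝ} (hf : Measurable f) (hf0 : ∀ s, 0 ≤ f s)
    {a b : ℝ} (hab : a ≤ b)
    (hint : ∀ v ∈ Ioc a b, IntegrableOn (fun s => exp (-(v * s)) * f s) (Ioi 0)) :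
    ∫ s in Ioi 0, (exp (-(a * s)) - exp (-(b * s))) / s * f s
      = ∫ v in Ioc a b, ∫ s in Ioi 0, exp (-(v * s)) * f s := by
  have hkernel : Measurable (Function.uncurry fun (v s : ℝ) => exp (-(v * s)) * f s) := by
    change Measurable fun p : ℝ × ℝ => exp (-(p.1 * p.2)) * f p.2
    fun_prop
  have hlhs_nonneg : 0 ≤ᵐ[volume.restrict (Ioi 0)]
      fun s => (exp (-(a * s)) - exp (-(b * s))) / s * f s := by
    filter_upwards [ae_restrict_mem measurableSet_Ioi] with s (hs : 0 < s)
    rw [← integral_Ioc_exp_neg_mul hs.ne' hab]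
    exact mul_nonneg (setIntegral_nonneg measurableSet_Ioc fun v _ => (exp_pos _).le) (hf0 s)
  rw [integral_eq_lintegral_of_nonneg_ae hlhs_nonneg (by fun_prop),
    integral_eq_lintegral_of_nonneg_ae
      (ae_of_all _ fun v => setIntegral_nonneg measurableSet_Ioi fun s _ =>
        mul_nonneg (exp_pos _).le (hf0 s))
      (hkernel.stronglyMeasurable.integral_prod_right'.aestronglyMeasurable)]
  congr 1
  calc ∫⁻ s in Ioi 0, ENNReal.ofReal ((exp (-(a * s)) - exp (-(b * s))) / s * f s)
      = ∫⁻ s in Ioi 0, ∫⁻ v in Ioc a b, ENNReal.ofReal (exp (-(v * s)) * f s) := by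
        refine setLIntegral_congr_fun measurableSet_Ioi fun s (hs : 0 < s) => ?_
        rw [← integral_Ioc_exp_neg_mul hs.ne' hab, ← integral_mul_const,
          ofReal_integral_eq_lintegral_ofReal
            ((by fun_prop : Continuous fun v => exp (-(v * s))).integrableOn_Ioc.mul_const _)
            (ae_of_all _ fun v => mul_nonneg (exp_pos _).le (hf0 s))]
    _ = ∫⁻ v in Ioc a b, ∫⁻ s in Ioi 0, ENNReal.ofReal (exp (-(v * s)) * f s) :=
        lintegral_lintegral_swap (hkernel.comp measurable_swap).ennreal_ofReal.aemeasurable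
    _ = ∫⁻ v in Ioc a b, ENNReal.ofReal (∫ s in Ioi 0, exp (-(v * s)) * f s) := by
        refine setLIntegral_congr_fun measurableSet_Ioc fun v hv => ?_
        rw [ofReal_integral_eq_lintegral_ofReal (hint v hv)
          (ae_of_all _ fun s => mul_nonneg (exp_pos _).le (hf0 s))]

lemma integral_inv_sqrt_sq_sub_one {a b : ℝ} (ha : 1 ≤ a) (hab : a ≤ b) :
    ∫ v in Ioc a b, (√(v ^ 2 - 1))⁻¹ = arcosh b - arcosh a := by
  have hcont : ContinuousOn arcosh (Icc a b) :=
    continuousOn_arcosh.mono fun v hv => ha.trans hv.1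
  have hderiv : ∀ v ∈ Ioo a b, HasDerivAt arcosh (√(v ^ 2 - 1))⁻¹ v :=
    fun v hv => hasDerivAt_arcosh (ha.trans_lt hv.1)
  rw [← intervalIntegral.integral_of_le hab,
    intervalIntegral.integral_eq_sub_of_hasDerivAt_of_le hab hcont hderiv
      ((intervalIntegrable_iff_integrableOn_Ioc_of_le hab).2
        (intervalIntegral.integrableOn_deriv_of_nonneg hcont hderiv fun v _ => by positivity))]

lemma integral_exp_sub_one_mul_besselIntensity {ω u : ℝ} (hω : 1 ≤ ω) (hu : 0 ≤ u) :
    ∫ s in Ioi 0, (exp (-u * s) - 1) * (s⁻¹ * exp (-ω * s) * besselI0 s)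
      = arcosh ω - arcosh (ω + u) := by
  have hintegrand : ∀ s : ℝ, (exp (-u * s) - 1) * (s⁻¹ * exp (-ω * s) * besselI0 s)
      = -((exp (-(ω * s)) - exp (-((ω + u) * s))) / s * besselI0 s) := by
    intro s
    rw [add_mul, neg_add, exp_add, neg_mul, neg_mul]
    ring
  have hlaplace : ∀ v ∈ Ioc ω (ω + u), ∫ s in Ioi 0, exp (-(v * s)) * besselI0 s
      = (√(v ^ 2 - 1))⁻¹ := fun v hv => integral_exp_neg_mul_besselI0 (hω.trans_lt hv.1)
  simp_rw [hintegrand]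
  rw [integral_neg, integral_exp_sub_exp_div_mul measurable_besselI0 besselI0_nonneg
      (by linarith) fun v hv => by
        simpa using integrableOn_pow_mul_exp_neg_mul_besselI0 (hω.trans_lt hv.1) 0,
    setIntegral_congr_fun measurableSet_Ioc hlaplace,
    integral_inv_sqrt_sq_sub_one hω (by linarith), neg_sub]

lemma integral_pow_mul_exp_mul_besselIntensity {ω u : ℝ} (h : 1 < u + ω) {N : ℕ} (hN : 1 ≤ N) :
    ∫ s in Ioi 0, s ^ N * exp (-u * s) * (s⁻¹ * exp (-ω * s) * besselI0 s)
      = Gamma N / (u + ω) ^ N * hyp2F1one (N / 2) ((N + 1) / 2) (1 / (u + ω) ^ 2) := by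
  rw [← integral_pow_mul_exp_neg_mul_besselI0 h hN]
  refine setIntegral_congr_fun measurableSet_Ioi fun s (hs : 0 < s) => ?_
  rw [← Nat.sub_add_cancel hN, pow_succ, add_mul, neg_add, exp_add, Nat.add_sub_cancel,
    neg_mul, neg_mul]
  field_simp

theorem eppf_normalized_bessel_general
    (ω : ℝ) (hω : 1 ≤ ω) (κ : ℝ)
    (k : ℕ) (nv : Fin k → ℕ) (hnv : ∀ j, 1 ≤ nv j)
    (n : ℕ) (hn : n = ∑ j, nv j) :
    (∫ u in Set.Ioi (0:ℝ),
        (u ^ (n - 1) / Real.Gamma n) *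
          Real.exp (κ * ∫ s in Set.Ioi (0:ℝ),
            (Real.exp (-u * s) - 1) * (s⁻¹ * Real.exp (-ω * s) * besselI0 s)) *
          ∏ j, κ * ∫ s in Set.Ioi (0:ℝ),
            s ^ (nv j) * Real.exp (-u * s) * (s⁻¹ * Real.exp (-ω * s) * besselI0 s))
      = κ ^ k *
          ∫ u in Set.Ioi (0:ℝ),
            (u ^ (n - 1) / Real.Gamma n) *
              ((ω + Real.sqrt (ω ^ 2 - 1)) /
                  (ω + u + Real.sqrt ((ω + u) ^ 2 - 1))) ^ κ *
              (1 / (u + ω) ^ n) *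
              ∏ j, Real.Gamma (nv j) *
                hyp2F1one ((nv j : ℝ) / 2) (((nv j : ℝ) + 1) / 2) (1 / (u + ω) ^ 2) := by
  rw [← integral_const_mul]
  refine setIntegral_congr_fun measurableSet_Ioi fun u (hu : 0 < u) => ?_
  have ht : 1 < u + ω := by linarith
  simp_rw [integral_exp_sub_one_mul_besselIntensity hω hu.le,
    integral_pow_mul_exp_mul_besselIntensity ht (hnv _)]
  rw [mul_comm κ, exp_mul, exp_sub, exp_arcosh hω, exp_arcosh (by linarith)]
  simp only [Finset.prod_mul_distrib, div_eq_mul_inv, Finset.prod_inv_distrib,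
    Finset.prod_pow_eq_pow_sum, Finset.prod_const, Finset.card_univ, Fintype.card_fin, ← hn]
  ring

/-- The general eppf formula of a homogeneous normalized CRM, specialized
to the Bessel intensity `ρ_B(s) = s⁻¹ e^{-ωs} I₀(s)`, equals the explicit eppf
`p_B(n_1,…,n_k; ω, κ)` of the normalized Bessel random measure. -/
theorem eppf_normalized_bessel
    (ω : ℝ) (hω : 1 ≤ ω) (κ : ℝ) (hκ : 0 < κ)
    (k : ℕ) (hk : 1 ≤ k) (nv : Fin k → ℕ) (hnv : ∀ j, 1 ≤ nv j)
    (n : ℕ) (hn : n = ∑ j, nv j) :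
    (∫ u in Set.Ioi (0:ℝ),
        (u ^ (n - 1) / Real.Gamma n) *
          Real.exp (κ * ∫ s in Set.Ioi (0:ℝ),
            (Real.exp (-u * s) - 1) * (s⁻¹ * Real.exp (-ω * s) * besselI0 s)) *
          ∏ j, κ * ∫ s in Set.Ioi (0:ℝ),
            s ^ (nv j) * Real.exp (-u * s) * (s⁻¹ * Real.exp (-ω * s) * besselI0 s))
      = κ ^ k *
          ∫ u in Set.Ioi (0:ℝ),
            (u ^ (n - 1) / Real.Gamma n) *
              ((ω + Real.sqrt (ω ^ 2 - 1)) /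
                  (ω + u + Real.sqrt ((ω + u) ^ 2 - 1))) ^ κ *
              (1 / (u + ω) ^ n) *
              ∏ j, Real.Gamma (nv j) *
                hyp2F1one ((nv j : ℝ) / 2) (((nv j : ℝ) + 1) / 2) (1 / (u + ω) ^ 2) :=
  eppf_normalized_bessel_general ω hω κ k nv hnv n hn
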